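/- Let ℓ ≥ 2 and γ = 2ℓ, and assume g_i ≥ 1 for all i ∈ ℤ/γℤ. Define the multidegree d on C by d_i = g_i − 1 if i is represented by an odd element of {1, …, 2ℓ} and d_i = g_i + 1 if i is represented by an even element of {1, …, 2ℓ}. Then the number of admissible subsets Z ⊆ ℤ/γℤ equals 1 + ℓ². (Corollary 4.4 of the paper: this number is the number of irreducible components of the Brill–Noether locus W_d(C).) -/

import Mathlib

open Finset

/-- The number of connected components of the subcurve of a circular curve indexed by `S`:
the number of `i ∈ S` with `i − 1 ∉ S`. -/
def nCirc {γ : ℕ} (S : Finset (ZMod γ)) : ℕ :=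
  (S.filter (fun i => i - 1 ∉ S)).card

/-- The multidegree `e` on the subcurve `Z` obtained from `d` by subtracting the points of
intersection of `Z` with its complement: `e i = d i − [i−1 ∉ Z] − [i+1 ∉ Z]`. -/
def eMult {γ : ℕ} (d : ZMod γ → ℤ) (Z : Finset (ZMod γ)) (i : ZMod γ) : ℤ :=
  d i - (if i - 1 ∈ Z then 0 else 1) - (if i + 1 ∈ Z then 0 else 1)

/-- The genus of the subcurve of the circular curve indexed by `Z`: it is `Σ_{i∈Z} g i`
for proper `Z`, and the total genus `1 + Σ_i g i` for `Z = ℤ/γℤ`. -/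
def gSub {γ : ℕ} [NeZero γ] (g : ZMod γ → ℕ) (Z : Finset (ZMod γ)) : ℤ :=
  if Z = Finset.univ then 1 + ∑ i, (g i : ℤ) else ∑ i ∈ Z, (g i : ℤ)

/-- `Z` is admissible for the multidegree `d` if `Z` is nonempty and connected, and the
multidegree `e = eMult d Z` is effective on `Z`, of total degree `g_Z − 1` on `Z`, and
semistable on `Z`. -/
def Admissible {γ : ℕ} [NeZero γ] (g : ZMod γ → ℕ) (d : ZMod γ → ℤ)
    (Z : Finset (ZMod γ)) : Prop :=
  Z.Nonempty ∧ (Z = Finset.univ ∨ nCirc Z = 1) ∧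
    (∀ i ∈ Z, 0 ≤ eMult d Z i) ∧
    (∑ i ∈ Z, eMult d Z i = gSub g Z - 1) ∧
    ∀ Y : Finset (ZMod γ), Y ⊆ Z → Y.Nonempty → Y ≠ Z →
      (∑ i ∈ Y, eMult d Z i) ≥ (∑ i ∈ Y, (g i : ℤ)) - nCirc Y

/-!
Write `d = g + σ`, where `σ = evenSign` is `±1` according to the parity. As `γ` is even, `σ` is
antiperiodic for the shift by one, so pairing `i` with `i + 1` inside a subset `Z` gives
`2 Σ_Z σ = Σ_{starts of Z} σ + Σ_{ends of Z} σ`. For a proper connected `Z` with start `a` and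
end `b` the degree condition reads `Σ_Z σ = 1`, i.e. `a` and `b` are both even; conversely, when
all boundary points of `Z` are even, the same identity applied to `Y ⊆ Z` gives semistability.
A proper connected subset is the arc from its start to its end, so the admissible subsets are
`ℤ/γℤ` and the `ℓ²` arcs between even points.
-/

namespace CircularCurve

variable {γ : ℕ}

section Boundary

variable (Z : Finset (ZMod γ))

def starts : Finset (ZMod γ) := Z.filter (fun i => i - 1 ∉ Z)

def ends : Finset (ZMod γ) := Z.filter (fun i => i + 1 ∉ Z)

lemma nCirc_eq_card_starts : nCirc Z = #(starts Z) := rfl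

variable {R : Type*} [AddCommGroup R]

lemma sum_filter_add_one_mem (f : ZMod γ → R) :
    ∑ i ∈ Z.filter (· + 1 ∈ Z), f (i + 1) = ∑ i ∈ Z.filter (· - 1 ∈ Z), f i :=
  sum_nbij' (· + 1) (· - 1) (fun _ => by simp +contextual) (fun _ => by simp +contextual)
    (fun _ _ => by simp) (fun _ _ => by simp) fun _ _ => rfl

lemma card_ends_eq_card_starts : #(ends Z) = #(starts Z) := by
  have h := sum_filter_add_one_mem Z (fun _ => (1 : ℤ))
  simp only [sum_const, nsmul_eq_mul, mul_one, Nat.cast_inj] at h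
  have hs := card_filter_add_card_filter_not (s := Z) (· - 1 ∈ Z)
  have he := card_filter_add_card_filter_not (s := Z) (· + 1 ∈ Z)
  simp only [starts, ends]
  omega

lemma two_nsmul_sum_of_antiperiodic {f : ZMod γ → R} (hf : Function.Antiperiodic f 1) :
    2 • ∑ i ∈ Z, f i = ∑ i ∈ starts Z, f i + ∑ i ∈ ends Z, f i := by
  have h := sum_filter_add_one_mem Z f
  rw [sum_congr rfl (fun i _ => hf i), sum_neg_distrib] at h
  have hs := sum_filter_add_sum_filter_not Z (· - 1 ∈ Z) f
  have he := sum_filter_add_sum_filter_not Z (· + 1 ∈ Z) f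
  rw [two_nsmul]
  nth_rw 1 [← hs]
  rw [← he, ← h, starts, ends]
  abel

variable {Z}

lemma starts_eq_singleton_iff {a : ZMod γ} :
    starts Z = {a} ↔ a ∈ Z ∧ a - 1 ∉ Z ∧ ∀ i ∈ Z, i ≠ a → i - 1 ∈ Z := by
  simp only [starts, eq_singleton_iff_unique_mem, mem_filter]
  grind

lemma ends_eq_singleton_iff {b : ZMod γ} :
    ends Z = {b} ↔ b ∈ Z ∧ b + 1 ∉ Z ∧ ∀ i ∈ Z, i ≠ b → i + 1 ∈ Z := by
  simp only [ends, eq_singleton_iff_unique_mem, mem_filter]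
  grind

lemma starts_univ [NeZero γ] : starts (univ : Finset (ZMod γ)) = ∅ := by
  simp [starts]

lemma ends_univ [NeZero γ] : ends (univ : Finset (ZMod γ)) = ∅ := by
  simp [ends]

end Boundary

section Parity

def evenSign (i : ZMod γ) : ℤ := if Even i.val then 1 else -1

lemma evenSign_le_one (i : ZMod γ) : evenSign i ≤ 1 := by
  unfold evenSign
  split_ifs <;> norm_num

lemma neg_one_le_evenSign_sub {i : ZMod γ} {P : Prop} [Decidable P] (h : ¬P → Even i.val) :
    -1 ≤ evenSign i - 2 * if P then 0 else 1 := by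
  unfold evenSign
  split_ifs <;> simp_all

lemma evenSign_eq_one_iff {i : ZMod γ} : evenSign i = 1 ↔ Even i.val := by
  unfold evenSign
  split_ifs with h <;> simp [h]

variable [NeZero γ]

lemma even_val_iff_cast_eq_zero (i : ZMod γ) : Even i.val ↔ (i.cast : ZMod 2) = 0 := by
  rw [ZMod.cast_eq_val, ZMod.natCast_eq_zero_iff_even]

lemma even_val_add_one_iff (h2 : 2 ∣ γ) (i : ZMod γ) : Even (i + 1).val ↔ ¬Even i.val := by
  rw [even_val_iff_cast_eq_zero, even_val_iff_cast_eq_zero, ZMod.cast_add h2, ZMod.cast_one h2]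
  generalize (i.cast : ZMod 2) = x
  revert x
  decide

lemma even_val_sub_one_iff (h2 : 2 ∣ γ) (i : ZMod γ) : Even (i - 1).val ↔ ¬Even i.val := by
  have := even_val_add_one_iff h2 (i - 1)
  rw [sub_add_cancel] at this
  tauto

lemma add_one_ne_of_even_val (h2 : 2 ∣ γ) {a b : ZMod γ} (ha : Even a.val) (hb : Even b.val) :
    b + 1 ≠ a := by
  rintro rfl
  exact (even_val_add_one_iff h2 b).1 ha hb

lemma card_filter_even_val {ℓ : ℕ} (hγ : γ = 2 * ℓ) :
    #(univ.filter fun i : ZMod γ => Even i.val) = ℓ := by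
  have h2 : 2 ∣ γ := ⟨ℓ, hγ⟩
  have hshift : #(univ.filter fun i : ZMod γ => Even i.val) =
      #(univ.filter fun i : ZMod γ => ¬Even i.val) :=
    card_nbij' (· + 1) (· - 1)
      (fun i hi => by simpa [← Nat.not_even_iff_odd, even_val_add_one_iff h2] using hi)
      (fun i hi => by simpa [even_val_sub_one_iff h2] using hi)
      (fun i _ => by simp) (fun i _ => by simp)
  have := card_filter_add_card_filter_not (s := univ) (fun i : ZMod γ => Even i.val)
  rw [card_univ, ZMod.card] at this
  omega

lemma evenSign_antiperiodic (h2 : 2 ∣ γ) : Function.Antiperiodic (evenSign (γ := γ)) 1 := by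
  intro i
  by_cases h : Even i.val <;> simp [evenSign, even_val_add_one_iff h2, h]

lemma eq_add_evenSign {ℓ : ℕ} {g : ZMod γ → ℕ} {d : ZMod γ → ℤ} (hγ : γ = 2 * ℓ)
    (hd : ∀ m : ℕ, 1 ≤ m → m ≤ 2 * ℓ →
      (Odd m → d m = g m - 1) ∧ (Even m → d m = g m + 1)) (i : ZMod γ) :
    d i = g i + evenSign i := by
  obtain ⟨m, hm1, hm2, rfl, hmi⟩ :
      ∃ m : ℕ, 1 ≤ m ∧ m ≤ 2 * ℓ ∧ (m : ZMod γ) = i ∧ (Even m ↔ Even i.val) := by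
    by_cases h0 : i.val = 0
    · have hi : i = 0 := (ZMod.val_eq_zero i).1 h0
      refine ⟨2 * ℓ, by have := NeZero.pos γ; omega, le_rfl, ?_, by simp [h0]⟩
      rw [hi, ← hγ, ZMod.natCast_self]
    · exact ⟨i.val, by omega, hγ ▸ (ZMod.val_lt i).le, ZMod.natCast_zmod_val i, Iff.rfl⟩
  rcases Nat.even_or_odd m with he | ho
  · rw [(hd m hm1 hm2).2 he, evenSign, if_pos (hmi.1 he)]
  · rw [(hd m hm1 hm2).1 ho, evenSign, if_neg (hmi.not.1 (Nat.not_even_iff_odd.2 ho))]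
    ring

end Parity

section Arc

lemma eq_of_natCast_eq {k m : ℕ} (hk : k < γ) (hm : m < γ) (h : (k : ZMod γ) = m) : k = m :=
  ((ZMod.natCast_eq_natCast_iff _ _ _).1 h).eq_of_lt_of_lt hk hm

def arc (a b : ZMod γ) : Finset (ZMod γ) := (range ((b - a).val + 1)).image fun k : ℕ => a + k

lemma mem_arc {a b i : ZMod γ} : i ∈ arc a b ↔ ∃ k ≤ (b - a).val, a + k = i := by
  simp [arc]

variable [NeZero γ]

lemma val_sub_add_one_lt {a b : ZMod γ} (h : b + 1 ≠ a) : (b - a).val + 1 < γ := by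
  refine lt_of_le_of_ne (ZMod.val_lt _) fun heq => h ?_
  have := congrArg (Nat.cast : ℕ → ZMod γ) heq
  push_cast [ZMod.natCast_self, ZMod.natCast_zmod_val] at this
  linear_combination this

lemma starts_arc {a b : ZMod γ} (h : b + 1 ≠ a) : starts (arc a b) = {a} := by
  have hn := val_sub_add_one_lt h
  refine starts_eq_singleton_iff.2 ⟨mem_arc.2 ⟨0, by simp⟩, ?_, ?_⟩
  · rw [mem_arc]
    rintro ⟨k, hk, hak⟩
    have := eq_of_natCast_eq (k := k + 1) (m := 0) (by omega) (NeZero.pos γ)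
      (by push_cast; linear_combination hak)
    omega
  · intro i hi hne
    obtain ⟨k, hk, rfl⟩ := mem_arc.1 hi
    cases k with
    | zero => simp at hne
    | succ k => exact mem_arc.2 ⟨k, by omega, by push_cast; ring⟩

lemma ends_arc {a b : ZMod γ} (h : b + 1 ≠ a) : ends (arc a b) = {b} := by
  have hn := val_sub_add_one_lt h
  have hb : a + ((b - a).val : ZMod γ) = b := by rw [ZMod.natCast_zmod_val]; ring
  refine ends_eq_singleton_iff.2 ⟨mem_arc.2 ⟨_, le_rfl, hb⟩, ?_, ?_⟩
  · rw [mem_arc]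
    rintro ⟨k, hk, hak⟩
    have := eq_of_natCast_eq (k := (b - a).val + 1) (m := k) hn (by omega)
      (by push_cast; linear_combination hb - hak)
    omega
  · intro i hi hne
    obtain ⟨k, hk, rfl⟩ := mem_arc.1 hi
    rcases hk.lt_or_eq with hk | rfl
    · exact mem_arc.2 ⟨k + 1, hk, by push_cast; ring⟩
    · exact absurd hb hne

lemma arc_ne_univ {a b : ZMod γ} (h : b + 1 ≠ a) : arc a b ≠ univ := fun e => by
  simpa [e, starts_univ] using starts_arc h

lemma arc_inj {a b a' b' : ZMod γ} (h : b + 1 ≠ a) (h' : b' + 1 ≠ a') :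
    arc a b = arc a' b' ↔ a = a' ∧ b = b' := by
  refine ⟨fun e => ⟨?_, ?_⟩, by rintro ⟨rfl, rfl⟩; rfl⟩
  · simpa [e, starts_arc h', eq_comm] using starts_arc h
  · simpa [e, ends_arc h', eq_comm] using ends_arc h

variable {Z : Finset (ZMod γ)} {a b : ZMod γ}

lemma add_natCast_mem_of_ends_eq_singleton (hb : ends Z = {b}) (ha : a ∈ Z) {k : ℕ}
    (hk : k ≤ (b - a).val) : a + k ∈ Z := by
  obtain ⟨-, -, hsucc⟩ := ends_eq_singleton_iff.1 hb
  have hlt := ZMod.val_lt (b - a)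
  induction k with
  | zero => simpa
  | succ k ih =>
    have hne : a + k ≠ b := fun e => by
      have := eq_of_natCast_eq (k := k) (m := (b - a).val) (by omega) (ZMod.val_lt _)
        (by rw [ZMod.natCast_zmod_val]; linear_combination e)
      omega
    simpa [add_assoc] using hsucc _ (ih (by omega)) hne

lemma add_natCast_mem_of_starts_eq_singleton (ha : starts Z = {a}) {m : ℕ} (hm : m < γ)
    (hmZ : a + m ∈ Z) {k : ℕ} (hk : k ≤ m) : a + k ∈ Z := by
  obtain ⟨-, -, hpred⟩ := starts_eq_singleton_iff.1 ha
  refine Nat.decreasingInduction (motive := fun k _ => a + (k : ZMod γ) ∈ Z)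
    (fun k hk ih => ?_) hmZ hk
  have hne : a + ((k + 1 : ℕ) : ZMod γ) ≠ a := fun e => by
    have := eq_of_natCast_eq (k := k + 1) (m := 0) (by omega) (NeZero.pos γ)
      (by push_cast at e ⊢; linear_combination e)
    omega
  simpa [← add_assoc] using hpred _ ih hne

lemma eq_arc_of_starts_ends (ha : starts Z = {a}) (hb : ends Z = {b}) : Z = arc a b := by
  have haZ := (starts_eq_singleton_iff.1 ha).1
  have hbZ := (ends_eq_singleton_iff.1 hb).2.1
  ext i
  rw [mem_arc]
  refine ⟨fun hi => ⟨(i - a).val, ?_, by rw [ZMod.natCast_zmod_val]; ring⟩, ?_⟩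
  · by_contra! hlt
    refine hbZ ?_
    have := add_natCast_mem_of_starts_eq_singleton ha (ZMod.val_lt (i - a))
      (by rwa [ZMod.natCast_zmod_val, add_sub_cancel]) hlt
    simpa [ZMod.natCast_zmod_val, ← add_assoc] using this
  · rintro ⟨k, hk, rfl⟩
    exact add_natCast_mem_of_ends_eq_singleton hb haZ hk

end Arc

section Admissible

lemma sum_eMult (d : ZMod γ → ℤ) (Z : Finset (ZMod γ)) :
    ∑ i ∈ Z, eMult d Z i = ∑ i ∈ Z, d i - #(starts Z) - #(ends Z) := by
  simp only [eMult, sum_sub_distrib, starts, ends, natCast_card_filter, ite_not]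

variable {g : ZMod γ → ℕ} {d : ZMod γ → ℤ} {Z : Finset (ZMod γ)}

lemma sum_eMult_eq_of_eq_add_evenSign (hd : ∀ i, d i = g i + evenSign i) :
    ∑ i ∈ Z, eMult d Z i =
      ∑ i ∈ Z, (g i : ℤ) + ∑ i ∈ Z, evenSign i - 2 * nCirc Z := by
  rw [sum_eMult, card_ends_eq_card_starts, sum_congr rfl fun i _ => hd i, sum_add_distrib,
    nCirc_eq_card_starts]
  ring

lemma eMult_nonneg (hg : ∀ i, 1 ≤ g i) (hd : ∀ i, d i = g i + evenSign i)
    (hs : ∀ i ∈ starts Z, Even i.val) (he : ∀ i ∈ ends Z, Even i.val) {i : ZMod γ}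
    (hi : i ∈ Z) : 0 ≤ eMult d Z i := by
  have := hg i
  by_cases hev : Even i.val
  · simp only [eMult, hd, evenSign, if_pos hev]
    split_ifs <;> omega
  · have hpred : i - 1 ∈ Z := by_contra fun h => hev (hs i (mem_filter.2 ⟨hi, h⟩))
    have hsucc : i + 1 ∈ Z := by_contra fun h => hev (he i (mem_filter.2 ⟨hi, h⟩))
    simp only [eMult, hd, evenSign, if_neg hev, if_pos hpred, if_pos hsucc]
    omega

variable [NeZero γ]

/-- A start of `Y` has sign `≥ -1`, and sign `+1` if it is also a start of `Z`: this pays for the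
`-2` that a start of `Z` costs in `eMult`. Likewise for ends. -/
lemma semistable_of_even_boundary (h2 : 2 ∣ γ) (hd : ∀ i, d i = g i + evenSign i)
    (hs : ∀ i ∈ starts Z, Even i.val) (he : ∀ i ∈ ends Z, Even i.val) {Y : Finset (ZMod γ)}
    (hYZ : Y ⊆ Z) : ∑ i ∈ Y, eMult d Z i ≥ ∑ i ∈ Y, (g i : ℤ) - nCirc Y := by
  have hstarts : ∑ i ∈ Y, (if i - 1 ∈ Z then 0 else 1 : ℤ) =
      ∑ i ∈ starts Y, (if i - 1 ∈ Z then 0 else 1 : ℤ) := by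
    refine (sum_subset (filter_subset _ _) fun i hi hni => ?_).symm
    have : i - 1 ∈ Y := by simpa [starts, hi] using hni
    simp [hYZ this]
  have hends : ∑ i ∈ Y, (if i + 1 ∈ Z then 0 else 1 : ℤ) =
      ∑ i ∈ ends Y, (if i + 1 ∈ Z then 0 else 1 : ℤ) := by
    refine (sum_subset (filter_subset _ _) fun i hi hni => ?_).symm
    have : i + 1 ∈ Y := by simpa [ends, hi] using hni
    simp [hYZ this]
  have hstarts_ge : #(starts Y) • (-1 : ℤ) ≤
      ∑ i ∈ starts Y, (evenSign i - 2 * if i - 1 ∈ Z then 0 else 1) := by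
    refine card_nsmul_le_sum _ _ _ fun i hi => neg_one_le_evenSign_sub fun h => ?_
    exact hs i (mem_filter.2 ⟨hYZ (filter_subset _ _ hi), h⟩)
  have hends_ge : #(ends Y) • (-1 : ℤ) ≤
      ∑ i ∈ ends Y, (evenSign i - 2 * if i + 1 ∈ Z then 0 else 1) := by
    refine card_nsmul_le_sum _ _ _ fun i hi => neg_one_le_evenSign_sub fun h => ?_
    exact he i (mem_filter.2 ⟨hYZ (filter_subset _ _ hi), h⟩)
  have hsign := two_nsmul_sum_of_antiperiodic Y (evenSign_antiperiodic h2)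
  rw [card_ends_eq_card_starts] at hends_ge
  simp only [sum_sub_distrib, ← mul_sum, smul_neg, nsmul_eq_mul, mul_one] at hstarts_ge hends_ge
  simp only [eMult, hd, sum_sub_distrib, sum_add_distrib, nCirc_eq_card_starts]
  rw [two_nsmul] at hsign
  linarith

lemma admissible_univ (h2 : 2 ∣ γ) (hg : ∀ i, 1 ≤ g i) (hd : ∀ i, d i = g i + evenSign i) :
    Admissible g d univ := by
  have hs : ∀ i ∈ starts (univ : Finset (ZMod γ)), Even i.val := by simp [starts_univ]
  have he : ∀ i ∈ ends (univ : Finset (ZMod γ)), Even i.val := by simp [ends_univ]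
  have hsign := two_nsmul_sum_of_antiperiodic univ (evenSign_antiperiodic h2)
  rw [starts_univ, ends_univ, sum_empty, add_zero, two_nsmul] at hsign
  refine ⟨univ_nonempty, Or.inl rfl, fun i hi => eMult_nonneg hg hd hs he hi, ?_,
    fun Y hY _ _ => semistable_of_even_boundary h2 hd hs he hY⟩
  rw [sum_eMult_eq_of_eq_add_evenSign hd, nCirc_eq_card_starts, starts_univ, gSub, if_pos rfl]
  simp only [card_empty, Nat.cast_zero]
  linarith

lemma admissible_of_starts_ends (h2 : 2 ∣ γ) (hg : ∀ i, 1 ≤ g i)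
    (hd : ∀ i, d i = g i + evenSign i) {a b : ZMod γ} (ha : starts Z = {a}) (hb : ends Z = {b})
    (hea : Even a.val) (heb : Even b.val) : Admissible g d Z := by
  have hs : ∀ i ∈ starts Z, Even i.val := by simpa [ha]
  have he : ∀ i ∈ ends Z, Even i.val := by simpa [hb]
  have hZ : Z ≠ univ := by
    rintro rfl
    simp [starts_univ] at ha
  have hsign := two_nsmul_sum_of_antiperiodic Z (evenSign_antiperiodic h2)
  rw [ha, hb, sum_singleton, sum_singleton, two_nsmul] at hsign
  rw [evenSign_eq_one_iff.2 hea, evenSign_eq_one_iff.2 heb] at hsign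
  refine ⟨⟨a, (starts_eq_singleton_iff.1 ha).1⟩, Or.inr (by simp [nCirc_eq_card_starts, ha]),
    fun i hi => eMult_nonneg hg hd hs he hi, ?_,
    fun Y hY _ _ => semistable_of_even_boundary h2 hd hs he hY⟩
  rw [sum_eMult_eq_of_eq_add_evenSign hd, nCirc_eq_card_starts, ha, gSub, if_neg hZ]
  simp only [card_singleton, Nat.cast_one]
  linarith

lemma exists_even_starts_ends_of_admissible (h2 : 2 ∣ γ) (hd : ∀ i, d i = g i + evenSign i)
    (hA : Admissible g d Z) (hZ : Z ≠ univ) :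
    ∃ a b, Even a.val ∧ Even b.val ∧ starts Z = {a} ∧ ends Z = {b} := by
  obtain ⟨-, hconn, -, hdeg, -⟩ := hA
  have hcard : #(starts Z) = 1 := hconn.resolve_left hZ
  obtain ⟨a, ha⟩ := card_eq_one.1 hcard
  obtain ⟨b, hb⟩ := card_eq_one.1 ((card_ends_eq_card_starts Z).trans hcard)
  have hsign := two_nsmul_sum_of_antiperiodic Z (evenSign_antiperiodic h2)
  rw [ha, hb, sum_singleton, sum_singleton, two_nsmul] at hsign
  rw [sum_eMult_eq_of_eq_add_evenSign hd, nCirc_eq_card_starts, hcard, Nat.cast_one, gSub,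
    if_neg hZ] at hdeg
  have hsa := evenSign_le_one a
  have hsb := evenSign_le_one b
  exact ⟨a, b, evenSign_eq_one_iff.1 (by linarith), evenSign_eq_one_iff.1 (by linarith), ha, hb⟩

lemma admissible_iff (h2 : 2 ∣ γ) (hg : ∀ i, 1 ≤ g i) (hd : ∀ i, d i = g i + evenSign i) :
    Admissible g d Z ↔ Z = univ ∨ ∃ a b, Even a.val ∧ Even b.val ∧ arc a b = Z := by
  constructor
  · intro hA
    refine or_iff_not_imp_left.2 fun hZ => ?_
    obtain ⟨a, b, hea, heb, ha, hb⟩ := exists_even_starts_ends_of_admissible h2 hd hA hZ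
    exact ⟨a, b, hea, heb, (eq_arc_of_starts_ends ha hb).symm⟩
  · rintro (rfl | ⟨a, b, hea, heb, rfl⟩)
    · exact admissible_univ h2 hg hd
    · have hab := add_one_ne_of_even_val h2 hea heb
      exact admissible_of_starts_ends h2 hg hd (starts_arc hab) (ends_arc hab) hea heb

end Admissible

end CircularCurve

open CircularCurve

theorem circular_even_count_components_general (γ : ℕ) [NeZero γ]
    (ℓ : ℕ) (hγ : γ = 2 * ℓ)
    (g : ZMod γ → ℕ) (hg : ∀ i, 1 ≤ g i)
    (d : ZMod γ → ℤ)
    (hd : ∀ m : ℕ, 1 ≤ m → m ≤ 2 * ℓ →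
      (Odd m → d ((m : ZMod γ)) = (g ((m : ZMod γ)) : ℤ) - 1) ∧
      (Even m → d ((m : ZMod γ)) = (g ((m : ZMod γ)) : ℤ) + 1)) :
    {Z : Finset (ZMod γ) | Admissible g d Z}.ncard = 1 + ℓ ^ 2 := by
  have h2 : 2 ∣ γ := ⟨ℓ, hγ⟩
  set E := univ.filter fun i : ZMod γ => Even i.val
  have hadm :
      {Z | Admissible g d Z} = ↑(insert univ ((E ×ˢ E).image fun p => arc p.1 p.2)) := by
    ext Z
    simp [admissible_iff h2 hg (eq_add_evenSign hγ hd), E, eq_comm (a := Z)]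
  have huniv : univ ∉ (E ×ˢ E).image fun p => arc p.1 p.2 := by
    simp only [mem_image, not_exists, not_and]
    rintro ⟨a, b⟩ hab
    simp only [E, mem_product, mem_filter, mem_univ, true_and] at hab
    exact arc_ne_univ (add_one_ne_of_even_val h2 hab.1 hab.2)
  have hinj : Set.InjOn (fun p : ZMod γ × ZMod γ => arc p.1 p.2) ↑(E ×ˢ E) := by
    rintro ⟨a, b⟩ hab ⟨a', b'⟩ hab' h
    simp only [E, coe_product, coe_filter, mem_univ, true_and, Set.mem_prod,
      Set.mem_ofPred_eq] at hab hab'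
    exact Prod.ext_iff.2 ((arc_inj (add_one_ne_of_even_val h2 hab.1 hab.2)
      (add_one_ne_of_even_val h2 hab'.1 hab'.2)).1 h)
  rw [hadm, Set.ncard_coe_finset, card_insert_of_notMem huniv, card_image_of_injOn hinj,
    card_product, card_filter_even_val hγ]
  ring

/-- Corollary 4.4: on a circular curve with `γ = 2ℓ` components, all of positive genus, with
`d i = g i − 1` on odd-indexed components and `d i = g i + 1` on even-indexed components, the
number of admissible subsets (equivalently, of irreducible components of `W_d(C)`) is
`1 + ℓ²`. -/
theorem circular_even_count_components (γ : ℕ) [NeZero γ]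
    (ℓ : ℕ) (hℓ : 2 ≤ ℓ) (hγ : γ = 2 * ℓ)
    (g : ZMod γ → ℕ) (hg : ∀ i, 1 ≤ g i)
    (d : ZMod γ → ℤ)
    (hd : ∀ m : ℕ, 1 ≤ m → m ≤ 2 * ℓ →
      (Odd m → d ((m : ZMod γ)) = (g ((m : ZMod γ)) : ℤ) - 1) ∧
      (Even m → d ((m : ZMod γ)) = (g ((m : ZMod γ)) : ℤ) + 1)) :
    {Z : Finset (ZMod γ) | Admissible g d Z}.ncard = 1 + ℓ ^ 2 :=
  circular_even_count_components_general γ ℓ hγ g hg d hd
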